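/- arXiv:1605.02228 — 7 statements merged into one kernel-verified Lean document; each statement's English description precedes it below -/
import Mathlib

section
/- If N is a normal subgroup of a finite group G not contained in Φ(G), and U is minimal among subgroups of G with NU = G, then N ∩ U = N ∩ Φ(U). -/
open Subgroup

/-- A subgroup `H` of `G` is subnormal if there is a chain of subgroups from `H` to `G`,
each normal in the next. -/
def IsSubnormal {G : Type*} [Group G] (H : Subgroup G) : Prop :=
  ∃ (n : ℕ) (c : ℕ → Subgroup G), c 0 = H ∧ c n = ⊤ ∧
    ∀ i, c i ≤ c (i + 1) ∧ ((c i).subgroupOf (c (i + 1))).Normal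

/-- A group is quasi-simple if it is perfect and its central quotient is simple. -/
def IsQuasiSimple (Q : Type*) [Group Q] : Prop :=
  commutator Q = ⊤ ∧ IsSimpleGroup (Q ⧸ Subgroup.center Q)

/-- A component of `G` is a subnormal quasi-simple subgroup. -/
def IsComponent {G : Type*} [Group G] (Q : Subgroup G) : Prop :=
  _root_.IsSubnormal Q ∧ IsQuasiSimple Q

/-- The layer `E(G)`: the subgroup generated by all components of `G`. -/
def layer (G : Type*) [Group G] : Subgroup G :=
  Subgroup.closure {x | ∃ Q : Subgroup G, IsComponent Q ∧ x ∈ Q}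

/-- The Fitting subgroup `F(G)`: the subgroup generated by all nilpotent normal
subgroups of `G`. -/
def fitting (G : Type*) [Group G] : Subgroup G :=
  Subgroup.normalClosure {x | ∃ N : Subgroup G, N.Normal ∧ Group.IsNilpotent N ∧ x ∈ N}

/-- The generalised Fitting subgroup `F*(G) = F(G) E(G)`. -/
def genFitting (G : Type*) [Group G] : Subgroup G := fitting G ⊔ layer G

/-- `N` is a minimal normal subgroup of `G`. -/
def IsMinimalNormal {G : Type*} [Group G] (N : Subgroup G) : Prop :=
  N.Normal ∧ N ≠ ⊥ ∧ ∀ M : Subgroup G, M.Normal → M ≤ N → M ≠ ⊥ → M = N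

/-- The socle of `G`: the subgroup generated by all minimal normal subgroups of `G`. -/
def socle (G : Type*) [Group G] : Subgroup G :=
  Subgroup.closure {x | ∃ N : Subgroup G, IsMinimalNormal N ∧ x ∈ N}

/-- `Soc(Z(G))`, viewed as a subgroup of `G`. -/
def centerSocle (G : Type*) [Group G] : Subgroup G :=
  (socle (Subgroup.center G)).map (Subgroup.center G).subtype

/-- The class `B` of groups all of whose quotients have trivial Frattini subgroup. -/
def classB (G : Type*) [Group G] : Prop :=
  ∀ (N : Subgroup G) [N.Normal], frattini (G ⧸ N) = ⊥

/-! If a maximal subgroup `M` of `U` missed `N ∩ U`, then `(N ∩ U) M = U`, hence `N M = G`,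
contradicting the minimality of `U`. So `N ∩ U` lies in every maximal subgroup of `U`. -/

theorem Order.le_radical_of_forall_sup_eq_top {α : Type*} [CompleteLattice α] {a : α}
    (h : ∀ b, a ⊔ b = ⊤ → b = ⊤) : a ≤ Order.radical α :=
  le_iInf₂ fun _ hm => not_not.mp fun ham =>
    hm.ne_top (h _ (codisjoint_iff.mp (hm.not_le_iff_codisjoint.mp ham).symm))

theorem le_frattini_of_forall_sup_eq_top {G : Type*} [Group G] {K : Subgroup G}
    (h : ∀ H, K ⊔ H = ⊤ → H = ⊤) : K ≤ frattini G :=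
  Order.le_radical_of_forall_sup_eq_top h

theorem sup_eq_top_of_sup_inf_eq {α : Type*} [Lattice α] [OrderTop α] {a b c : α}
    (hab : a ⊔ b = ⊤) (hc : a ⊓ b ⊔ c = b) : a ⊔ c = ⊤ := by
  rw [← hab, ← hc, ← sup_assoc, sup_inf_self]

theorem subgroupOf_le_frattini_of_minimal_supplement {G : Type*} [Group G] {N U : Subgroup G}
    (hU : N ⊔ U = ⊤) (hmin : ∀ V : Subgroup G, V ≤ U → N ⊔ V = ⊤ → V = U) :
    N.subgroupOf U ≤ frattini U := by
  refine le_frattini_of_forall_sup_eq_top fun H hH => ?_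
  have hH_sup : N ⊓ U ⊔ H.map U.subtype = U := by
    simpa only [Subgroup.map_sup, subgroupOf_map_subtype, ← MonoidHom.range_eq_map, range_subtype]
      using congrArg (map U.subtype) hH
  have hH_map : H.map U.subtype = U :=
    hmin _ (map_subtype_le H) (sup_eq_top_of_sup_inf_eq hU hH_sup)
  apply map_injective U.subtype_injective
  rw [hH_map, ← MonoidHom.range_eq_map, range_subtype]

theorem stmt_1_general (G : Type*) [Group G] (N U : Subgroup G)
    (hU : N ⊔ U = ⊤)
    (hmin : ∀ V : Subgroup G, V ≤ U → N ⊔ V = ⊤ → V = U) :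
    N ⊓ U = N ⊓ (frattini U).map U.subtype := by
  refine le_antisymm (le_inf inf_le_left ?_) (inf_le_inf_left N (map_subtype_le _))
  rw [← subgroupOf_map_subtype]
  exact map_mono (subgroupOf_le_frattini_of_minimal_supplement hU hmin)

/-- If `N ⊴ G` is not contained in `Φ(G)` and `U` is minimal among supplements of `N`
in `G`, then `N ∩ U = N ∩ Φ(U)`. -/
theorem stmt_1 (G : Type*) [Group G] [Finite G] (N U : Subgroup G) (hN : N.Normal)
    (hNF : ¬ N ≤ frattini G) (hU : N ⊔ U = ⊤)
    (hmin : ∀ V : Subgroup G, V ≤ U → N ⊔ V = ⊤ → V = U) :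
    N ⊓ U = N ⊓ (frattini U).map U.subtype :=
  stmt_1_general G N U hU hmin
end

section
/- For any finite group G, the Frattini subgroup Φ(G) contains Z(G) ∩ G', the intersection of the center with the derived subgroup. -/
open Subgroup

/-!
A maximal subgroup `M` either contains `Z(G)`, or `M Z(G) = G`. In the second case `M` is
normalised by both `M` and `Z(G)`, hence normal, and `G / M` is a quotient of the abelian group
`Z(G)`, so `G' ≤ M`. Either way `Z(G) ∩ G' ≤ M`.
-/

namespace Subgroup

variable {G : Type*} [Group G] {H : Subgroup G}

theorem normal_of_sup_center_eq_top (h : H ⊔ center G = ⊤) : H.Normal := by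
  rw [← normalizer_eq_top_iff, eq_top_iff, ← h]
  exact sup_le le_normalizer (center_le_normalizer _)

theorem commutator_le_of_sup_center_eq_top (h : H ⊔ center G = ⊤) : _root_.commutator G ≤ H :=
  have := normal_of_sup_center_eq_top h
  Normal.commutator_le_of_self_sup_commutative_eq_top h inferInstance

theorem center_inf_commutator_le_of_isCoatom (hH : IsCoatom H) :
    center G ⊓ _root_.commutator G ≤ H := by
  by_cases hZ : center G ≤ H
  · exact inf_le_left.trans hZ
  · exact inf_le_right.trans <| commutator_le_of_sup_center_eq_top <|
      codisjoint_iff.mp (hH.not_le_iff_codisjoint.mp hZ)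

end Subgroup

theorem stmt_5_general (G : Type*) [Group G] :
    Subgroup.center G ⊓ commutator G ≤ frattini G :=
  le_iInf₂ fun _ hM => center_inf_commutator_le_of_isCoatom hM

/-- `Z(G) ∩ G' ≤ Φ(G)` for a finite group `G`. -/
theorem stmt_5 (G : Type*) [Group G] [Finite G] :
    Subgroup.center G ⊓ commutator G ≤ frattini G :=
  stmt_5_general G
end

section
/- If A is an abelian normal subgroup of a finite group G with A ∩ Φ(G) = 1, then A is complemented in G (there exists a subgroup C with A ∩ C = 1 and AC = G). -/
/-!
Take `C` minimal with `A ⊔ C = ⊤`. Since `A` is abelian and normal, `A ⊓ C` is normalized by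
both `A` and `C`, hence normal in `G`. If it were nontrivial it would not lie in `Φ(G)`, so some
maximal subgroup `M` omits it, and by Dedekind's law `C = (A ⊓ C) ⊔ (C ⊓ M)`. Then already
`A ⊔ (C ⊓ M) = ⊤` with `C ⊓ M < C`, contradicting the minimality of `C`.
-/

open Subgroup

namespace Subgroup

variable {G : Type*} [Group G]

theorem sup_inf_assoc_of_le_of_normal {N K : Subgroup G} [N.Normal] (H : Subgroup G)
    (hNK : N ≤ K) : (N ⊔ H) ⊓ K = N ⊔ H ⊓ K :=
  SetLike.coe_injective <| by
    rw [coe_inf, normal_mul, normal_mul, mul_inf_assoc _ _ _ hNK]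

theorem normal_inf_of_sup_eq_top {A C : Subgroup G} (hA : A.Normal) [IsMulCommutative A]
    (hAC : A ⊔ C = ⊤) : (A ⊓ C).Normal := by
  rw [← normalizer_eq_top_iff, eq_top_iff, ← hAC]
  refine sup_le ?_ ?_
  · calc A ≤ centralizer A := le_centralizer A
      _ ≤ centralizer (A ⊓ C : Subgroup G) := centralizer_le inf_le_left
      _ ≤ normalizer (A ⊓ C : Subgroup G) := centralizer_le_normalizer _
  · exact (le_inf le_normalizer_of_normal le_normalizer).trans inf_normalizer_le_normalizer_inf

theorem exists_lt_sup_eq_of_not_le_frattini {N C : Subgroup G} [N.Normal] (hNC : N ≤ C)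
    (hN : ¬ N ≤ frattini G) : ∃ C' < C, N ⊔ C' = C := by
  obtain ⟨M, hM, hNM⟩ : ∃ M : Subgroup G, IsCoatom M ∧ ¬ N ≤ M := by
    simpa [frattini, Order.radical] using hN
  have hNM_top : N ⊔ M = ⊤ := hM.2 _ (right_lt_sup.mpr hNM)
  refine ⟨C ⊓ M, inf_lt_left.mpr fun hCM => hNM (hNC.trans hCM), ?_⟩
  rw [inf_comm, ← sup_inf_assoc_of_le_of_normal M hNC, hNM_top, top_inf_eq]

end Subgroup

/-- An abelian normal subgroup meeting `Φ(G)` trivially is complemented. -/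
theorem stmt_6 (G : Type*) [Group G] [Finite G] (A : Subgroup G) (hA : A.Normal)
    (hab : IsMulCommutative A) (hmeet : A ⊓ frattini G = ⊥) :
    ∃ C : Subgroup G, A ⊔ C = ⊤ ∧ A ⊓ C = ⊥ := by
  obtain ⟨C, hmin⟩ := exists_minimal_of_wellFoundedLT (fun C : Subgroup G => A ⊔ C = ⊤)
    ⟨⊤, sup_top_eq A⟩
  have hC : A ⊔ C = ⊤ := hmin.prop
  refine ⟨C, hC, ?_⟩
  have : (A ⊓ C).Normal := normal_inf_of_sup_eq_top hA hC
  by_contra hne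
  have hnot_le : ¬ A ⊓ C ≤ frattini G := fun h =>
    hne (le_bot_iff.mp (hmeet ▸ le_inf inf_le_left h))
  obtain ⟨C', hC'C, hsup⟩ := exists_lt_sup_eq_of_not_le_frattini inf_le_right hnot_le
  have hAC' : A ⊔ C' = ⊤ := by
    rw [← hC, ← hsup, ← sup_assoc, sup_inf_self]
  exact hmin.not_prop_of_lt hC'C hAC'
end

section
/- Let N be a central subgroup of a finite group G with Φ(N) = 1. Then Φ(G/N) = Φ(G)N/N. -/
/-!
Let `T` be the preimage of `Φ(G/N)` in `G`; it lies in every maximal subgroup containing `N`.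
A maximal subgroup `M` not containing `N` is normalised by `M` and by the central `N`, so it is
normal, and `G/M`, a simple quotient of the abelian group `N`, has prime order. Hence the
intersection `V` of these maximal subgroups contains `G'` and the `rad |G|`-th powers, so `G/NV` is
abelian of squarefree exponent. Such a group has trivial Frattini subgroup (a subgroup maximal
among those avoiding a given `t ≠ 1` has prime index), whence `T ≤ NV`. Dedekind's law then
gives `T = N(V ∩ T)`, and `V ∩ T` lies in every maximal subgroup of `G`.
-/
open Subgroup

section

variable {G H : Type*} [Group G] [Group H]

theorem le_frattini_iff {K : Subgroup G} :
    K ≤ frattini G ↔ ∀ M : Subgroup G, IsCoatom M → K ≤ M := by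
  simp only [frattini, Order.radical, le_iInf_iff, Set.mem_ofPred_eq]

theorem isCoatom_map_of_ker_le {f : G →* H} (hf : Function.Surjective f) {M : Subgroup G}
    (hM : IsCoatom M) (hker : f.ker ≤ M) : IsCoatom (M.map f) := by
  have hM' : (M.map f).comap f = M := by rw [comap_map_eq, sup_eq_left.2 hker]
  refine ⟨fun h => hM.1 (by rw [← hM', h, comap_top]), fun B hB => ?_⟩
  have hB' := hM.2 _ (hM' ▸ (comap_lt_comap_of_surjective hf).2 hB)
  exact comap_injective hf (hB'.trans (comap_top f).symm)

theorem comap_frattini_le_of_isCoatom {N M : Subgroup G} [N.Normal] (hM : IsCoatom M)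
    (hNM : N ≤ M) : (frattini (G ⧸ N)).comap (QuotientGroup.mk' N) ≤ M := by
  have hMN := isCoatom_map_of_ker_le (QuotientGroup.mk'_surjective N) hM
    ((QuotientGroup.ker_mk' N).trans_le hNM)
  calc (frattini (G ⧸ N)).comap (QuotientGroup.mk' N)
      ≤ (M.map (QuotientGroup.mk' N)).comap (QuotientGroup.mk' N) :=
        comap_mono (frattini_le_coatom hMN)
    _ = M := by rw [QuotientGroup.comap_map_mk', sup_eq_right.2 hNM]

theorem comap_frattini_le_of_frattini_eq_bot {N L : Subgroup G} [N.Normal] [L.Normal]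
    (hNL : N ≤ L) (hL : frattini (G ⧸ L) = ⊥) :
    (frattini (G ⧸ N)).comap (QuotientGroup.mk' N) ≤ L := by
  have hmap : ((frattini (G ⧸ N)).comap (QuotientGroup.mk' N)).map (QuotientGroup.mk' L) ≤
      frattini (G ⧸ L) := by
    refine le_frattini_iff.2 fun K hK => map_le_iff_le_comap.2 ?_
    refine comap_frattini_le_of_isCoatom
      (isCoatom_comap_of_surjective (QuotientGroup.mk'_surjective L) hK) ?_
    exact hNL.trans (QuotientGroup.le_comap_mk' L K)
  rwa [hL, map_le_iff_le_comap, MonoidHom.comap_bot, QuotientGroup.ker_mk'] at hmap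

end

section

variable {R : Type*} [Group R] [Finite R]

theorem orderOf_prime_of_forall_mem_zpowers (hR : Squarefree (Monoid.exponent R)) {t : R}
    (ht : t ≠ 1) (hmin : ∀ y : R, y ≠ 1 → t ∈ zpowers y) {y : R} (hy : y ≠ 1) :
    (orderOf y).Prime := by
  have hn1 : orderOf y ≠ 1 := mt orderOf_eq_one_iff.1 hy
  obtain ⟨m, hm⟩ := Nat.minFac_dvd (orderOf y)
  set q := (orderOf y).minFac
  have hq : q.Prime := Nat.minFac_prime hn1
  have hm0 : m ≠ 0 := by rintro rfl; exact (orderOf_pos y).ne' (by rw [hm, mul_zero])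
  have hcop : q.Coprime m :=
    Nat.coprime_of_squarefree_mul (hm ▸ hR.squarefree_of_dvd (Monoid.order_dvd_exponent y))
  suffices m = 1 by rwa [hm, this, mul_one]
  by_contra hm1
  -- `t` would lie in the subgroups generated by `y ^ m` and `y ^ q`, of coprime orders `q` and `m`
  have hym : orderOf (y ^ m) = q := by
    rw [orderOf_pow_of_dvd hm0 (Dvd.intro_left q hm.symm), hm,
      Nat.mul_div_cancel _ (Nat.pos_of_ne_zero hm0)]
  have hyq : orderOf (y ^ q) = m := by
    rw [orderOf_pow_of_dvd hq.ne_zero (Dvd.intro m hm.symm), hm, Nat.mul_div_cancel_left _ hq.pos]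
  have htq : orderOf t ∣ q := hym ▸ orderOf_dvd_of_mem_zpowers
    (hmin _ fun h => hq.ne_one (by rw [← hym, h, orderOf_one]))
  have htm : orderOf t ∣ m := hyq ▸ orderOf_dvd_of_mem_zpowers
    (hmin _ fun h => hm1 (by rw [← hyq, h, orderOf_one]))
  exact ht (orderOf_eq_one_iff.1 (Nat.eq_one_of_dvd_coprimes hcop htq htm))

theorem isSimpleOrder_of_forall_mem_zpowers (hR : Squarefree (Monoid.exponent R)) {t : R}
    (ht : t ≠ 1) (hmin : ∀ y : R, y ≠ 1 → t ∈ zpowers y) :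
    IsSimpleOrder (Subgroup R) := by
  have hgen : ∀ y : R, y ≠ 1 → zpowers t = zpowers y := by
    intro y hy
    have hle : zpowers t ≤ zpowers y := zpowers_le.2 (hmin y hy)
    refine eq_of_le_of_card_ge hle (le_of_eq ?_)
    have hdvd := card_dvd_of_le hle
    rw [Nat.card_zpowers, Nat.card_zpowers] at hdvd ⊢
    have hp : (orderOf y).Prime := orderOf_prime_of_forall_mem_zpowers hR ht hmin hy
    exact (hp.eq_one_or_self_of_dvd _ hdvd).resolve_left (mt orderOf_eq_one_iff.1 ht) |>.symm
  have : Nontrivial R := ⟨⟨t, 1, ht⟩⟩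
  refine ⟨fun K => K.bot_or_exists_ne_one.imp id fun ⟨y, hyK, hy⟩ =>
    eq_top_iff.2 fun x _ => ?_⟩
  obtain rfl | hx := eq_or_ne x 1
  · exact K.one_mem
  · have hxy : x ∈ zpowers y := by rw [← hgen y hy, hgen x hx]; exact mem_zpowers x
    exact zpowers_le.2 hyK hxy

theorem frattini_eq_bot_of_squarefree_exponent [IsMulCommutative R]
    (hR : Squarefree (Monoid.exponent R)) : frattini R = ⊥ := by
  refine eq_bot_iff.2 fun t ht => Subgroup.mem_bot.2 (by_contra fun ht1 => ?_)
  obtain ⟨K, htK, hK⟩ := (Set.toFinite {K : Subgroup R | t ∉ K}).exists_maximal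
    ⟨⊥, fun h => ht1 (Subgroup.mem_bot.1 h)⟩
  have hmin : ∀ y : R ⧸ K, y ≠ 1 → (t : R ⧸ K) ∈ zpowers y := by
    intro y hy
    obtain ⟨x, rfl⟩ := QuotientGroup.mk'_surjective K y
    have hxK : t ∈ K ⊔ zpowers x := by
      by_contra htx
      exact hy ((QuotientGroup.eq_one_iff x).2
        (hK htx le_sup_left (le_sup_right (a := K) (mem_zpowers x))))
    have := mem_map_of_mem (QuotientGroup.mk' K) hxK
    rwa [Subgroup.map_sup, QuotientGroup.map_mk'_self, bot_sup_eq, MonoidHom.map_zpowers] at this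
  have : IsSimpleOrder (Subgroup (R ⧸ K)) := isSimpleOrder_of_forall_mem_zpowers
    (hR.squarefree_of_dvd (Group.exponent_quotient_dvd K))
    (mt (QuotientGroup.eq_one_iff t).1 htK) hmin
  have hKco : IsCoatom K := by
    simpa using isCoatom_comap_of_surjective (QuotientGroup.mk'_surjective K) isCoatom_bot
  exact htK (frattini_le_coatom hKco ht)

end

section

variable {G : Type*} [Group G]

theorem normal_of_commutator_le {L : Subgroup G} (h : commutator G ≤ L) : L.Normal :=
  commutator_top_left_le_iff.1 ((commutator_mono le_rfl le_top).trans h)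

theorem isSimpleGroup_quotient_of_isCoatom {M : Subgroup G} [M.Normal] (hM : IsCoatom M) :
    IsSimpleGroup (G ⧸ M) := by
  have : Nontrivial (G ⧸ M) := QuotientGroup.nontrivial_iff.2 hM.1
  refine ⟨fun H _ => ?_⟩
  have hinj := comap_injective (QuotientGroup.mk'_surjective M)
  rcases hM.le_iff.1 (QuotientGroup.le_comap_mk' M H) with h | h
  · exact .inr (hinj (h.trans (comap_top _).symm))
  · exact .inl (hinj (h.trans (by rw [MonoidHom.comap_bot, QuotientGroup.ker_mk'])))

theorem frattini_quotient_eq_bot_of_commutator_le [Finite G] {L : Subgroup G} [L.Normal] {e : ℕ}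
    (he : Squarefree e) (hcomm : commutator G ≤ L) (hpow : ∀ x : G, x ^ e ∈ L) :
    frattini (G ⧸ L) = ⊥ := by
  have := Subgroup.Normal.quotient_commutative_iff_commutator_le.2 hcomm
  refine frattini_eq_bot_of_squarefree_exponent (he.squarefree_of_dvd ?_)
  refine Monoid.exponent_dvd_of_forall_pow_eq_one fun x => ?_
  obtain ⟨x, rfl⟩ := QuotientGroup.mk'_surjective L x
  rw [← map_pow, QuotientGroup.mk'_apply, QuotientGroup.eq_one_iff]
  exact hpow x

open UniqueFactorizationMonoid in
theorem pow_radical_card_mem [Finite G] {M : Subgroup G} [M.Normal] (hM : M.index.Prime)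
    (x : G) : x ^ radical (Nat.card G) ∈ M := by
  rw [← QuotientGroup.eq_one_iff, QuotientGroup.mk_pow]
  refine orderOf_dvd_iff_pow_eq_one.1 ((_root_.orderOf_dvd_natCard _).trans ?_)
  rw [← index_eq_card, dvd_radical_iff_of_irreducible hM.prime.irreducible Nat.card_pos.ne']
  exact M.index_dvd_card

namespace IsCoatom

variable {N M : Subgroup G} (hN : N ≤ center G) (hM : IsCoatom M) (hNM : ¬ N ≤ M)
include hN hM hNM

theorem normal_of_not_le_of_le_center : M.Normal := by
  refine normalizer_eq_top_iff.1 (top_le_iff.1 ?_)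
  rw [← hM.2 _ (left_lt_sup.2 hNM)]
  exact sup_le le_normalizer (hN.trans (center_le_normalizer _))

theorem commutator_le_of_not_le_of_le_center : commutator G ≤ M := by
  have := hM.normal_of_not_le_of_le_center hN hNM
  have : IsMulCommutative N :=
    ⟨⟨fun a b => Subtype.ext (mem_center_iff.1 (hN b.2) a)⟩⟩
  exact Subgroup.Normal.commutator_le_of_self_sup_commutative_eq_top
    (hM.2 _ (left_lt_sup.2 hNM)) this

open scoped IsMulCommutative in
theorem index_prime_of_not_le_of_le_center : M.index.Prime := by
  have := hM.normal_of_not_le_of_le_center hN hNM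
  have := Subgroup.Normal.quotient_commutative_iff_commutator_le.2
    (hM.commutator_le_of_not_le_of_le_center hN hNM)
  have := isSimpleGroup_quotient_of_isCoatom hM
  rw [index_eq_card]
  exact IsSimpleGroup.prime_card

end IsCoatom

open UniqueFactorizationMonoid Pointwise in
theorem comap_frattini_le_sup_frattini [Finite G] {N : Subgroup G} [N.Normal]
    (hN : N ≤ center G) :
    (frattini (G ⧸ N)).comap (QuotientGroup.mk' N) ≤ N ⊔ frattini G := by
  set T := (frattini (G ⧸ N)).comap (QuotientGroup.mk' N)
  set V := ⨅ (M : Subgroup G) (_ : IsCoatom M ∧ ¬ N ≤ M), M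
  have hV : ∀ M, IsCoatom M → ¬ N ≤ M → V ≤ M :=
    fun M hM hNM => iInf₂_le M ⟨hM, hNM⟩
  have hcomm : commutator G ≤ V :=
    le_iInf₂ fun M ⟨hM, hNM⟩ => hM.commutator_le_of_not_le_of_le_center hN hNM
  have hpow : ∀ x : G, x ^ radical (Nat.card G) ∈ V := by
    refine fun x => mem_iInf.2 fun M => mem_iInf.2 fun ⟨hM, hNM⟩ => ?_
    have := hM.normal_of_not_le_of_le_center hN hNM
    exact pow_radical_card_mem (hM.index_prime_of_not_le_of_le_center hN hNM) x
  have : (N ⊔ V).Normal := normal_of_commutator_le (hcomm.trans le_sup_right)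
  have hTV : T ≤ N ⊔ V := comap_frattini_le_of_frattini_eq_bot le_sup_left
    (frattini_quotient_eq_bot_of_commutator_le squarefree_radical (hcomm.trans le_sup_right)
      fun x => mem_sup_right (hpow x))
  have hVT : V ⊓ T ≤ frattini G := le_frattini_iff.2 fun M hM => by
    by_cases hNM : N ≤ M
    · exact inf_le_right.trans (comap_frattini_le_of_isCoatom hM hNM)
    · exact inf_le_left.trans (hV M hM hNM)
  intro x hxT
  have hx : x ∈ (N : Set G) * (V : Set G) ∩ (T : Set G) :=
    ⟨normal_mul N V ▸ hTV hxT, hxT⟩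
  rw [← mul_inf_assoc N V T (QuotientGroup.le_comap_mk' N _)] at hx
  obtain ⟨n, hn, v, hv, rfl⟩ := hx
  exact mul_mem (mem_sup_left hn) (mem_sup_right (hVT hv))

end

theorem stmt_11_general (G : Type*) [Group G] [Finite G] (N : Subgroup G) [N.Normal]
    (hc : N ≤ Subgroup.center G) :
    frattini (G ⧸ N) = (frattini G).map (QuotientGroup.mk' N) := by
  have hsurj := QuotientGroup.mk'_surjective N
  refine le_antisymm ?_ (map_le_iff_le_comap.2 (frattini_le_comap_frattini_of_surjective hsurj))
  rw [← comap_le_comap_of_surjective hsurj, QuotientGroup.comap_map_mk']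
  exact comap_frattini_le_sup_frattini hc

/-- If `N` is a `Φ`-free central subgroup of a finite group `G`, then
`Φ(G/N) = Φ(G)N/N`. -/
theorem stmt_11 (G : Type*) [Group G] [Finite G] (N : Subgroup G) [N.Normal]
    (hc : N ≤ Subgroup.center G) (hfree : frattini N = ⊥) :
    frattini (G ⧸ N) = (frattini G).map (QuotientGroup.mk' N) :=
  stmt_11_general G N hc
end

section
/- If N ≤ Soc(Z(G)) for a finite group G, then Φ(G/N) = Φ(G)N/N. -/
open Subgroup

/-
The preimage of `Φ(G ⧸ N)` is the intersection `Ψ(N)` of the maximal subgroups containing `N`,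
and it always contains `Φ(G) N`; we show `Ψ(N) ≤ Φ(G) N` by induction on `N`. Elements of
`Soc(Z(G))` have squarefree order, so if `N ≰ Φ(G)` some `z ∈ N` of prime order avoids a maximal
subgroup `M`, and as `z` is central, `G = M × ⟨z⟩`. A maximal subgroup `M₀ ⊇ N ∩ M` either
contains `N`, or contains `M`, or gives the maximal subgroup `(M₀ ∩ M)⟨z⟩ ⊇ N` meeting `M` in
`M₀ ∩ M`. Hence `Ψ(N) ∩ M ≤ Ψ(N ∩ M) = Φ(G)(N ∩ M)`, and `Ψ(N) = (Ψ(N) ∩ M)⟨z⟩ ≤ Φ(G) N`.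
-/

open scoped Pointwise

namespace Subgroup

variable {G H : Type*} [Group G] [Group H]

theorem sup_inf_assoc_of_coe_sup_eq_mul {A B C : Subgroup G}
    (hAB : ((A ⊔ B : Subgroup G) : Set G) = (A : Set G) * B) (hAC : A ≤ C) :
    (A ⊔ B) ⊓ C = A ⊔ B ⊓ C := by
  refine le_antisymm (fun x ⟨hxAB, hxC⟩ => ?_)
    (sup_le (le_inf le_sup_left hAC) (inf_le_inf_right C le_sup_right))
  have hx : x ∈ (A : Set G) * ↑(B ⊓ C) := by
    rw [mul_inf_assoc A B C hAC, ← hAB]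
    exact ⟨hxAB, hxC⟩
  obtain ⟨a, ha, b, hb, rfl⟩ := hx
  exact mul_mem (mem_sup_left ha) (mem_sup_right hb)

theorem normal_of_le_center {Z : Subgroup G} (hZ : Z ≤ center G) : Z.Normal :=
  ⟨fun n hn g => by rwa [mem_center_iff.1 (hZ hn) g, mul_inv_cancel_right]⟩

theorem normal_of_codisjoint_of_le_center {M Z : Subgroup G} (hMZ : Codisjoint M Z)
    (hZ : Z ≤ center G) : M.Normal :=
  normalizer_eq_top_iff.1 <| top_unique <|
    hMZ.eq_top ▸ sup_le le_normalizer (hZ.trans (center_le_normalizer _))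

theorem isCoatom_of_isCoatom_comap {f : G →* H} (hf : Function.Surjective f) {K : Subgroup H}
    (hK : IsCoatom (K.comap f)) : IsCoatom K :=
  ⟨fun h => hK.1 (by rw [h, comap_top]), fun L hL =>
    comap_injective hf (by rw [comap_top]; exact hK.2 _ ((comap_lt_comap_of_surjective hf).2 hL))⟩

theorem exists_isCoatom_notMem_of_notMem_frattini {x : G} (hx : x ∉ frattini G) :
    ∃ M : Subgroup G, IsCoatom M ∧ x ∉ M := by
  simpa [frattini, Order.radical, mem_iInf] using hx

theorem isCompl_zpowers_of_isCoatom {M : Subgroup G} (hM : IsCoatom M) {z : G}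
    (hz : (orderOf z).Prime) (hzM : z ∉ M) : IsCompl M (zpowers z) := by
  have hzM' : ¬ zpowers z ≤ M := fun h => hzM (h (mem_zpowers z))
  refine ⟨disjoint_iff.2 ?_, codisjoint_iff.2 (hM.2 _ (left_lt_sup.2 hzM'))⟩
  have hdvd : Nat.card ↥(M ⊓ zpowers z) ∣ orderOf z :=
    Nat.card_zpowers z ▸ card_dvd_of_le inf_le_right
  rcases (Nat.dvd_prime hz).1 hdvd with h1 | hp
  · exact card_eq_one.1 h1
  · have : Finite (zpowers z) :=
      Nat.finite_of_card_ne_zero (by rw [Nat.card_zpowers]; exact hz.ne_zero)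
    refine absurd (eq_of_le_of_card_ge inf_le_right ?_) fun h => hzM' (inf_eq_right.1 h)
    rw [Nat.card_zpowers, hp]

/-- For normal `N`, the preimage of `Φ(G ⧸ N)` (see `comap_frattini_of_surjective`). -/
def relFrattini (N : Subgroup G) : Subgroup G :=
  ⨅ M ∈ {M : Subgroup G | IsCoatom M ∧ N ≤ M}, M

theorem relFrattini_le {N M : Subgroup G} (hM : IsCoatom M) (hNM : N ≤ M) : relFrattini N ≤ M :=
  biInf_le _ ⟨hM, hNM⟩

theorem frattini_sup_le_relFrattini (N : Subgroup G) : frattini G ⊔ N ≤ relFrattini N :=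
  sup_le (le_iInf₂ fun _ hM => frattini_le_coatom hM.1) (le_iInf₂ fun _ hM => hM.2)

theorem relFrattini_le_frattini {N : Subgroup G} (hN : N ≤ frattini G) :
    relFrattini N ≤ frattini G :=
  le_iInf₂ fun _ hM => relFrattini_le hM (hN.trans (frattini_le_coatom hM))

theorem comap_frattini_of_surjective {f : G →* H} (hf : Function.Surjective f) :
    (frattini H).comap f = relFrattini f.ker := by
  refine le_antisymm (le_iInf₂ fun M ⟨hM, hkM⟩ => ?_) ?_
  · have hM' : (M.map f).comap f = M := by rw [comap_map_eq, sup_of_le_left hkM]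
    rw [← hM']
    exact comap_mono (frattini_le_coatom (isCoatom_of_isCoatom_comap hf (hM'.symm ▸ hM)))
  · simp only [frattini, Order.radical, comap_iInf]
    exact le_iInf₂ fun K hK => relFrattini_le (isCoatom_comap_of_surjective hf hK)
      (ker_le_comap f K)

section Complement

variable {M Z : Subgroup G}

theorem inf_sup_eq_of_codisjoint [Z.Normal] (hMZ : Codisjoint M Z) {K : Subgroup G}
    (hZK : Z ≤ K) : K ⊓ M ⊔ Z = K := by
  have h := sup_inf_assoc_of_coe_sup_eq_mul (normal_mul Z M) hZK
  rw [sup_comm, hMZ.eq_top, top_inf_eq] at h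
  rw [inf_comm, sup_comm]
  exact h.symm

theorem sup_inf_eq_of_disjoint [Z.Normal] (hMZ : Disjoint M Z) {A : Subgroup G} (hAM : A ≤ M) :
    (A ⊔ Z) ⊓ M = A := by
  rw [sup_inf_assoc_of_coe_sup_eq_mul (mul_normal A Z) hAM, inf_comm, hMZ.eq_bot, sup_bot_eq]

theorem isCoatom_inf_sup (hZ : Z ≤ center G) (hMZ : IsCompl M Z) {M₀ : Subgroup G}
    (hM₀ : IsCoatom M₀) (hZM₀ : ¬ Z ≤ M₀) (hMM₀ : ¬ M ≤ M₀) : IsCoatom (M₀ ⊓ M ⊔ Z) := by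
  have := normal_of_le_center hZ
  have : M₀.Normal :=
    normal_of_codisjoint_of_le_center (codisjoint_iff.2 (hM₀.2 _ (left_lt_sup.2 hZM₀))) hZ
  have hM₂M : (M₀ ⊓ M ⊔ Z) ⊓ M = M₀ ⊓ M := sup_inf_eq_of_disjoint hMZ.disjoint inf_le_right
  refine ⟨fun htop => hMM₀ ?_, fun K hK => ?_⟩
  · rw [htop, top_inf_eq] at hM₂M
    exact inf_eq_right.1 hM₂M.symm
  have hZK : Z ≤ K := le_sup_right.trans hK.le
  have hKM : ¬ K ⊓ M ≤ M₀ := fun h => hK.not_ge <| by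
    rw [← inf_sup_eq_of_codisjoint hMZ.codisjoint hZK]
    exact sup_le_sup_right (le_inf h inf_le_right) Z
  -- Dedekind's law with `M₀` normal gives `M = (K ⊓ M) ⊔ (M₀ ⊓ M)`.
  have hMK : M ≤ K := by
    have h := sup_inf_assoc_of_coe_sup_eq_mul (mul_normal (K ⊓ M) M₀) (inf_le_right (a := K))
    rw [hM₀.2 _ (right_lt_sup.2 hKM), top_inf_eq] at h
    rw [h]
    exact sup_le inf_le_left (le_sup_left.trans hK.le)
  rw [eq_top_iff, ← hMZ.sup_eq_top]
  exact sup_le hMK hZK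

theorem relFrattini_inf_le (hZ : Z ≤ center G) (hMZ : IsCompl M Z) {N : Subgroup G}
    (hZN : Z ≤ N) : relFrattini N ⊓ M ≤ relFrattini (N ⊓ M) := by
  have := normal_of_le_center hZ
  have hN : N ⊓ M ⊔ Z = N := inf_sup_eq_of_codisjoint hMZ.codisjoint hZN
  refine le_iInf₂ fun M₀ ⟨hM₀, hNM₀⟩ => ?_
  by_cases hZM₀ : Z ≤ M₀
  · exact inf_le_left.trans (relFrattini_le hM₀ (hN ▸ sup_le hNM₀ hZM₀))
  by_cases hMM₀ : M ≤ M₀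
  · exact inf_le_right.trans hMM₀
  have hNM₂ : N ≤ M₀ ⊓ M ⊔ Z := hN ▸ sup_le_sup_right (le_inf hNM₀ inf_le_right) Z
  calc relFrattini N ⊓ M ≤ (M₀ ⊓ M ⊔ Z) ⊓ M :=
        inf_le_inf_right M (relFrattini_le (isCoatom_inf_sup hZ hMZ hM₀ hZM₀ hMM₀) hNM₂)
    _ = M₀ ⊓ M := sup_inf_eq_of_disjoint hMZ.disjoint inf_le_right
    _ ≤ M₀ := inf_le_left

end Complement

theorem mem_of_pow_mem_of_coprime {K : Subgroup G} {x : G} {p m : ℕ} (hpm : p.Coprime m)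
    (hp : x ^ p ∈ K) (hm : x ^ m ∈ K) : x ∈ K := by
  obtain ⟨a, b, hab⟩ := Nat.Coprime.isCoprime hpm
  have hx : x = (x ^ p) ^ a * (x ^ m) ^ b := by
    rw [← zpow_natCast, ← zpow_natCast, ← zpow_mul, ← zpow_mul, ← zpow_add, mul_comm (p : ℤ),
      mul_comm (m : ℤ), hab, zpow_one]
  rw [hx]
  exact mul_mem (zpow_mem hp a) (zpow_mem hm b)

theorem mem_of_forall_prime_orderOf_pow_mem {K : Subgroup G} {x : G}
    (hx : Squarefree (orderOf x)) (h : ∀ k : ℕ, (orderOf (x ^ k)).Prime → x ^ k ∈ K) :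
    x ∈ K := by
  induction hn : orderOf x using Nat.strong_induction_on generalizing x with
  | _ n ih =>
  rcases eq_or_ne n 1 with rfl | hn1
  · rw [orderOf_eq_one_iff.1 hn]
    exact one_mem K
  obtain ⟨p, hp, m, rfl⟩ := Nat.exists_prime_and_dvd hn1
  obtain ⟨hpm, -, hm⟩ := Nat.squarefree_mul_iff.1 (hn ▸ hx)
  have hxp : orderOf (x ^ p) = m := by
    rw [orderOf_pow_of_dvd hp.ne_zero (hn ▸ dvd_mul_right p m), hn,
      Nat.mul_div_cancel_left m hp.pos]
  have hxm : orderOf (x ^ m) = p := by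
    rw [orderOf_pow_of_dvd hm.ne_zero (hn ▸ dvd_mul_left m p), hn,
      Nat.mul_div_cancel p hm.ne_zero.bot_lt]
  refine mem_of_pow_mem_of_coprime hpm ?_ (h m (hxm ▸ hp))
  refine ih m ?_ (hxp ▸ hm) (fun k hk => ?_) hxp
  · exact lt_mul_left hm.ne_zero.bot_lt hp.one_lt
  · rw [← pow_mul] at hk ⊢
    exact h _ hk

theorem relFrattini_le_frattini_sup [Finite G] {N : Subgroup G} (hNc : N ≤ center G)
    (hsq : ∀ x ∈ N, Squarefree (orderOf x)) : relFrattini N ≤ frattini G ⊔ N := by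
  induction N using WellFoundedLT.induction with
  | _ N ih =>
  by_cases hNΦ : N ≤ frattini G
  · exact (relFrattini_le_frattini hNΦ).trans le_sup_left
  obtain ⟨x, hxN, hxΦ⟩ := SetLike.not_le_iff_exists.1 hNΦ
  obtain ⟨M, hM, hxM⟩ := exists_isCoatom_notMem_of_notMem_frattini hxΦ
  obtain ⟨k, hk, hkM⟩ : ∃ k : ℕ, (orderOf (x ^ k)).Prime ∧ x ^ k ∉ M := by
    by_contra! h
    exact hxM (mem_of_forall_prime_orderOf_pow_mem (hsq x hxN) h)
  have hZN : zpowers (x ^ k) ≤ N := zpowers_le.2 (pow_mem hxN k)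
  have hZc := hZN.trans hNc
  have := normal_of_le_center hZc
  have hMZ := isCompl_zpowers_of_isCoatom hM hk hkM
  have hIH := ih _ (inf_lt_left.2 fun h => hkM (h (pow_mem hxN k))) (inf_le_left.trans hNc)
    fun y hy => hsq y hy.1
  have hZrel := hZN.trans (le_sup_right.trans (frattini_sup_le_relFrattini N))
  calc relFrattini N = relFrattini N ⊓ M ⊔ zpowers (x ^ k) :=
        (inf_sup_eq_of_codisjoint hMZ.codisjoint hZrel).symm
    _ ≤ relFrattini (N ⊓ M) ⊔ zpowers (x ^ k) :=
        sup_le_sup_right (relFrattini_inf_le hZc hMZ hZN) _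
    _ ≤ frattini G ⊔ (N ⊓ M) ⊔ zpowers (x ^ k) := sup_le_sup_right hIH _
    _ ≤ frattini G ⊔ N := sup_le (sup_le_sup_left inf_le_left _) (hZN.trans le_sup_right)

end Subgroup

theorem Nat.squarefree_lcm {a b : ℕ} (ha : Squarefree a) (hb : Squarefree b) :
    Squarefree (a.lcm b) := by
  rw [Nat.squarefree_iff_factorization_le_one (Nat.lcm_ne_zero ha.ne_zero hb.ne_zero)]
  intro p
  rw [Nat.factorization_lcm ha.ne_zero hb.ne_zero, Finsupp.sup_apply]
  exact sup_le ((Nat.squarefree_iff_factorization_le_one ha.ne_zero).1 ha p)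
    ((Nat.squarefree_iff_factorization_le_one hb.ne_zero).1 hb p)

section Socle

variable {C : Type*} [Group C] [IsMulCommutative C] [Finite C]

theorem IsMinimalNormal.prime_card {N : Subgroup C} (hN : IsMinimalNormal N) :
    (Nat.card N).Prime := by
  obtain ⟨-, hbot, hmin⟩ := hN
  obtain ⟨p, hp, hpN⟩ := Nat.exists_prime_and_dvd (N.one_lt_card_iff_ne_bot.2 hbot).ne'
  have := Fact.mk hp
  obtain ⟨g, hg⟩ := exists_prime_orderOf_dvd_card' (G := N) p hpN
  have hg' : orderOf (g : C) = p := (orderOf_coe g).trans hg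
  have hne : zpowers (g : C) ≠ ⊥ :=
    zpowers_ne_bot.2 fun h => hp.ne_one (by rw [← hg', h, orderOf_one])
  rw [← hmin _ inferInstance (zpowers_le.2 g.2) hne, Nat.card_zpowers, hg']
  exact hp

theorem squarefree_orderOf_of_mem_socle {x : C} (hx : x ∈ socle C) : Squarefree (orderOf x) := by
  induction hx using Subgroup.closure_induction with
  | mem y hy =>
    obtain ⟨N, hN, hyN⟩ := hy
    exact hN.prime_card.squarefree.squarefree_of_dvd (N.orderOf_dvd_natCard hyN)
  | one => simp
  | mul a b _ _ ha hb =>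
    exact (Nat.squarefree_lcm ha hb).squarefree_of_dvd
      (Commute.orderOf_mul_dvd_lcm (mul_comm' a b))
  | inv a _ ha => rwa [orderOf_inv]

end Socle

theorem centerSocle_le_center (G : Type*) [Group G] : centerSocle G ≤ center G :=
  Subgroup.map_subtype_le _

theorem squarefree_orderOf_of_mem_centerSocle {G : Type*} [Group G] [Finite G] {x : G}
    (hx : x ∈ centerSocle G) : Squarefree (orderOf x) := by
  obtain ⟨y, hy, rfl⟩ := mem_map.1 hx
  rw [coe_subtype, orderOf_coe]
  exact squarefree_orderOf_of_mem_socle hy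

/-- If `N ≤ Soc(Z(G))` then `Φ(G/N) = Φ(G)N/N`. -/
theorem stmt_12 (G : Type*) [Group G] [Finite G] (N : Subgroup G) [N.Normal]
    (hc : N ≤ centerSocle G) :
    frattini (G ⧸ N) = (frattini G).map (QuotientGroup.mk' N) := by
  have hsurj := QuotientGroup.mk'_surjective N
  have hrel : relFrattini N = frattini G ⊔ N :=
    le_antisymm
      (relFrattini_le_frattini_sup (hc.trans (centerSocle_le_center G))
        fun x hx => squarefree_orderOf_of_mem_centerSocle (hc hx))
      (frattini_sup_le_relFrattini N)
  rw [← map_comap_eq_self_of_surjective hsurj (frattini _),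
    comap_frattini_of_surjective hsurj, QuotientGroup.ker_mk', hrel, Subgroup.map_sup,
    QuotientGroup.map_mk'_self, sup_bot_eq]
end

section
/- The class B of finite groups G such that Φ(G/N) = 1 for every normal subgroup N of G is a formation: it is closed under quotients, and if M, N ⊴ G with M ∩ N = 1 and both G/M and G/N belong to B, then G belongs to B. -/
open Subgroup

/-!
Closure under quotients is immediate, a quotient of a quotient of `G` being a quotient of `G`.
For subdirect products argue by induction on `|G|`. Pick a minimal normal subgroup `A ≤ M`;
then `G/A` is a subdirect product of `G/M` and a quotient of `G/N`, so `G/A ∈ B`, and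
`A ⊄ Φ(G)` since `Φ(G) ≤ N`. For `K ⊴ G` not containing `A`, `Φ(G/K)` lies in the minimal
normal subgroup `AK/K ≅ A`. If it were all of `AK/K`, then `A` would be nilpotent, hence
abelian, hence complemented by a maximal subgroup `U ≅ G/A ∈ B`; as `UK/K` and `Φ(G/K)`
together generate `G/K`, the group `G/K` is a quotient of `U`, so `Φ(G/K) = 1` after all.
-/

open QuotientGroup

section Frattini

variable {G H : Type*} [Group G] [Group H]

theorem MulEquiv.frattini_eq_bot (e : G ≃* H) (h : frattini G = ⊥) : frattini H = ⊥ := by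
  have hker : (e.symm : H →* G).ker = ⊥ := (MonoidHom.ker_eq_bot_iff _).mpr e.symm.injective
  simpa [h, hker] using
    frattini_le_comap_frattini_of_surjective (φ := e.symm.toMonoidHom) e.symm.surjective

theorem frattini_le_of_frattini_quotient_eq_bot {N : Subgroup G} [N.Normal]
    (h : frattini (G ⧸ N) = ⊥) : frattini G ≤ N := by
  simpa [h, MonoidHom.comap_bot] using frattini_le_comap_frattini_of_surjective (mk'_surjective N)

end Frattini

namespace classB

variable {G H : Type*} [Group G] [Group H]

theorem of_surjective (hG : classB G) (f : G →* H) (hf : Function.Surjective f) :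
    classB H := fun N _ ↦
  (quotientKerEquivOfSurjective ((mk' N).comp f) ((mk'_surjective N).comp hf)).frattini_eq_bot
    (hG _)

theorem of_le_comap {N : Subgroup G} [N.Normal] {L : Subgroup H} [L.Normal]
    (hN : classB (G ⧸ N)) (f : G →* H) (hf : Function.Surjective f) (h : N ≤ L.comap f) :
    classB (H ⧸ L) :=
  hN.of_surjective _
    (QuotientGroup.map_surjective_of_surjective N L f ((mk'_surjective L).comp hf) h)

theorem frattini_eq_bot (hG : classB G) : frattini G = ⊥ :=
  le_bot_iff.mp (frattini_le_of_frattini_quotient_eq_bot (hG ⊥))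

theorem quotient_of_le {A K : Subgroup G} [A.Normal] [K.Normal] (hA : classB (G ⧸ A))
    (h : A ≤ K) : classB (G ⧸ K) :=
  hA.of_le_comap (MonoidHom.id G) Function.surjective_id h

end classB

theorem Subgroup.map_mk'_inf_map_mk'_eq_bot {G : Type*} [Group G] {A M N : Subgroup G} [A.Normal]
    (hAM : A ≤ M) (h : M ⊓ N = ⊥) : M.map (mk' A) ⊓ N.map (mk' A) = ⊥ := by
  rw [eq_bot_iff]
  rintro _ ⟨⟨m, hm, rfl⟩, ⟨n, hn, hnm⟩⟩
  have hnM : n ∈ M := by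
    simpa using mul_mem hm (hAM ((QuotientGroup.eq (s := A)).mp hnm.symm))
  have : n = 1 := by simpa [h] using mem_inf.mpr ⟨hnM, hn⟩
  simp [← hnm, this]

namespace IsMinimalNormal

variable {G H : Type*} [Group G] [Group H] {A : Subgroup G}

theorem eq_bot_or_eq (hA : IsMinimalNormal A) {L : Subgroup G} [hL : L.Normal] (hLA : L ≤ A) :
    L = ⊥ ∨ L = A :=
  or_iff_not_imp_left.mpr (hA.2.2 L hL hLA)

theorem inf_eq_bot_of_not_le (hA : IsMinimalNormal A) {K : Subgroup G} [K.Normal]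
    (hAK : ¬ A ≤ K) : A ⊓ K = ⊥ :=
  have := hA.1
  (hA.eq_bot_or_eq inf_le_left).resolve_right fun h ↦ hAK (h ▸ inf_le_right)

theorem map (hA : IsMinimalNormal A) {f : G →* H} (hf : Function.Surjective f)
    (hAf : ¬ A ≤ f.ker) : IsMinimalNormal (A.map f) := by
  have := hA.1
  refine ⟨hA.1.map f hf, mt (map_eq_bot_iff A).mp hAf, fun L hL hLA hL0 ↦ le_antisymm hLA ?_⟩
  have := hL.comap f
  have hAL : A ⊓ L.comap f = A := by
    refine (hA.eq_bot_or_eq inf_le_left).resolve_left fun h ↦ hL0 (eq_bot_iff.mpr ?_)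
    intro y hy
    obtain ⟨a, ha, rfl⟩ := hLA hy
    have : a = 1 := by simpa [h] using mem_inf.mpr ⟨ha, show a ∈ L.comap f from hy⟩
    simp [this]
  exact map_le_iff_le_comap.mpr (hAL ▸ inf_le_right)

theorem le_centralizer_self (hA : IsMinimalNormal A) [Group.IsNilpotent A] :
    A ≤ centralizer A := by
  have := hA.1
  have : Nontrivial A := (nontrivial_iff_ne_bot A).mpr hA.2.1
  obtain ⟨z, hz, hz1⟩ := (center A).bot_or_exists_ne_one.resolve_left
    (Group.IsNilpotent.center_ne_bot A)
  have hZ : A ⊓ centralizer A ≠ ⊥ := by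
    refine (ne_bot_iff_exists_ne_one).mpr ⟨⟨z, z.2, fun a ha ↦ ?_⟩, ?_⟩
    · exact congrArg Subtype.val (mem_center_iff.mp hz ⟨a, ha⟩)
    · exact fun h ↦ hz1 (Subtype.ext (congrArg Subtype.val h :))
  exact inf_eq_left.mp ((hA.eq_bot_or_eq inf_le_left).resolve_left hZ)

theorem exists_isComplement' (hA : IsMinimalNormal A) (hcomm : A ≤ centralizer A)
    (hΦ : ¬ A ≤ frattini G) : ∃ U : Subgroup G, U.IsComplement' A := by
  have := hA.1
  obtain ⟨U, hU, hAU⟩ : ∃ U, IsCoatom U ∧ ¬ A ≤ U := by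
    by_contra! h
    exact hΦ (le_iInf₂ h)
  have htop : U ⊔ A = ⊤ := codisjoint_iff.mp (hU.not_le_iff_codisjoint.mp hAU)
  -- `U ⊓ A` is normalised by `U`, and centralised by the abelian group `A`.
  have : (U ⊓ A).Normal := by
    rw [← normalizer_eq_top_iff, eq_top_iff, ← htop]
    refine sup_le ((le_inf U.le_normalizer ?_).trans inf_normalizer_le_normalizer_inf) ?_
    · simp [normalizer_eq_top_iff.mpr hA.1]
    · exact hcomm.trans ((centralizer_le inf_le_right).trans (centralizer_le_normalizer _))
  have hUA : U ⊓ A = ⊥ :=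
    (hA.eq_bot_or_eq inf_le_right).resolve_right fun h ↦ hAU (h ▸ inf_le_left)
  refine ⟨U, isComplement'_of_disjoint_and_mul_eq_univ (disjoint_iff.mpr hUA) ?_⟩
  rw [← mul_normal, htop, coe_top]

end IsMinimalNormal

theorem Subgroup.exists_isMinimalNormal_le {G : Type*} [Group G] [Finite G] {M : Subgroup G}
    [hM : M.Normal] (hM0 : M ≠ ⊥) : ∃ A, IsMinimalNormal A ∧ A ≤ M := by
  obtain ⟨A, hAM, hA⟩ :=
    exists_minimal_le_of_wellFoundedLT (fun B : Subgroup G ↦ B.Normal ∧ B ≠ ⊥) M ⟨hM, hM0⟩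
  exact ⟨A, ⟨hA.1.1, hA.1.2, fun B hB hBA hB0 ↦ hA.eq_of_le ⟨hB, hB0⟩ hBA⟩, hAM⟩

theorem Subgroup.isNilpotent_of_map_mk'_le_frattini {G : Type*} [Group G] [Finite G]
    {A K : Subgroup G} [K.Normal] (hAK : A ⊓ K = ⊥) (h : A.map (mk' K) ≤ frattini (G ⧸ K)) :
    Group.IsNilpotent A := by
  have := frattini_nilpotent (G := G ⧸ K)
  let φ : A →* frattini (G ⧸ K) :=
    ((mk' K).comp A.subtype).codRestrict _ fun a ↦ h ⟨a, a.2, rfl⟩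
  refine isNilpotent_of_ker_le_center φ (le_of_eq_of_le ?_ bot_le)
  rw [MonoidHom.ker_codRestrict, ← MonoidHom.comap_ker, ker_mk']
  exact subgroupOf_eq_bot.mpr (disjoint_iff.mpr (inf_comm A K ▸ hAK))

theorem classB_of_isMinimalNormal {G : Type*} [Group G] [Finite G] {A : Subgroup G}
    [A.Normal] (hA : IsMinimalNormal A) (hΦ : ¬ A ≤ frattini G) (hB : classB (G ⧸ A)) :
    classB G := by
  intro K _
  by_cases hAK : A ≤ K
  · exact (hB.quotient_of_le hAK).frattini_eq_bot
  have hĀ : IsMinimalNormal (A.map (mk' K)) := hA.map (mk'_surjective K) (by rwa [ker_mk'])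
  have := hĀ.1
  have hΦĀ : frattini (G ⧸ K) ≤ A.map (mk' K) := frattini_le_of_frattini_quotient_eq_bot
    (hB.of_le_comap (mk' K) (mk'_surjective K) (le_comap_map _ _)).frattini_eq_bot
  refine (hĀ.eq_bot_or_eq hΦĀ).resolve_right fun hΦeq ↦ hĀ.2.1 ?_
  have := isNilpotent_of_map_mk'_le_frattini (hA.inf_eq_bot_of_not_le hAK) hΦeq.ge
  obtain ⟨U, hU⟩ := hA.exists_isComplement' hA.le_centralizer_self hΦ
  have hUB : classB U :=
    hB.of_surjective hU.QuotientMulEquiv.toMonoidHom hU.QuotientMulEquiv.surjective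
  have hUK : U.map (mk' K) = ⊤ := frattini_nongenerating <| by
    rw [hΦeq, ← Subgroup.map_sup, hU.sup_eq_top, map_top_of_surjective _ (mk'_surjective K)]
  have hKB : classB (G ⧸ K) := hUB.of_surjective ((mk' K).comp U.subtype) <| by
    rw [← MonoidHom.range_eq_top, MonoidHom.range_comp, range_subtype, hUK]
  exact hΦeq ▸ hKB.frattini_eq_bot

theorem classB_of_inf_eq_bot {G : Type*} [Group G] [Finite G] {M N : Subgroup G} [M.Normal]
    [N.Normal] (h : M ⊓ N = ⊥) (hM : classB (G ⧸ M)) (hN : classB (G ⧸ N)) : classB G := by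
  obtain ⟨n, hn⟩ : ∃ n, Nat.card G = n := ⟨_, rfl⟩
  induction n using Nat.strong_induction_on generalizing G with
  | _ n ih =>
  rcases eq_or_ne M ⊥ with rfl | hM0
  · exact hM.of_surjective _ (quotientBot (G := G)).surjective
  obtain ⟨A, hA, hAM⟩ := exists_isMinimalNormal_le hM0
  have := hA.1
  have hΦ : ¬ A ≤ frattini G := fun hle ↦ hA.2.1 <| le_bot_iff.mp <|
    h ▸ le_inf hAM (hle.trans (frattini_le_of_frattini_quotient_eq_bot hN.frattini_eq_bot))
  have hcard : Nat.card (G ⧸ A) < n := by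
    rw [← hn, card_eq_card_quotient_mul_card_subgroup A]
    exact lt_mul_of_one_lt_right Nat.card_pos (A.one_lt_card_iff_ne_bot.mpr hA.2.1)
  have := ‹M.Normal›.map (mk' A) (mk'_surjective A)
  have := ‹N.Normal›.map (mk' A) (mk'_surjective A)
  exact classB_of_isMinimalNormal hA hΦ <| ih _ hcard (map_mk'_inf_map_mk'_eq_bot hAM h)
    (hM.of_le_comap (mk' A) (mk'_surjective A) (le_comap_map _ _))
    (hN.of_le_comap (mk' A) (mk'_surjective A) (le_comap_map _ _)) rfl

/-- The class `B` is a formation: it is closed under quotients, and under subdirect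
products (if `M ⊓ N = 1` and `G/M, G/N ∈ B` then `G ∈ B`). -/
theorem stmt_15 :
    (∀ (G : Type) [Group G] [Finite G] (N : Subgroup G) [N.Normal],
        classB G → classB (G ⧸ N)) ∧
      (∀ (G : Type) [Group G] [Finite G] (M N : Subgroup G) [M.Normal] [N.Normal],
        M ⊓ N = ⊥ → classB (G ⧸ M) → classB (G ⧸ N) → classB G) :=
  ⟨fun _ _ _ N _ hG ↦ hG.of_surjective (mk' N) (mk'_surjective N),
    fun _ _ _ _ _ _ _ ↦ classB_of_inf_eq_bot⟩
end

section
/- A finite group G satisfies Φ(G/N) = Φ(G)N/N for all normal subgroups N of G if and only if G/Φ(G) has no Frattini chief factors (i.e., every quotient of G/Φ(G) has trivial Frattini subgroup). -/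
open Subgroup

/-!
The inclusion `Φ(G)N/N ≤ Φ(G/N)` holds for every surjection. Conversely, if every quotient
`G/M` with `Φ(G) ≤ M` has trivial Frattini subgroup, apply this to `M = Φ(G)N`: since
`(G/N)/(M/N) ≅ G/M`, the Frattini subgroup of `G/N` lies in `M/N = Φ(G)N/N`.
-/

open QuotientGroup

section
variable {G H : Type*} [Group G] [Group H]

lemma map_frattini_le_of_surjective {φ : G →* H} (hφ : Function.Surjective φ) :
    (frattini G).map φ ≤ frattini H :=
  map_le_iff_le_comap.2 (frattini_le_comap_frattini_of_surjective hφ)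

lemma frattini_le_ker_of_surjective {φ : G →* H} (hφ : Function.Surjective φ)
    (hH : frattini H = ⊥) : frattini G ≤ φ.ker := by
  simpa only [hH, MonoidHom.comap_bot] using frattini_le_comap_frattini_of_surjective hφ

lemma MulEquiv.frattini_eq_bot_iff (e : G ≃* H) : frattini G = ⊥ ↔ frattini H = ⊥ := by
  refine ⟨fun hG => ?_, fun hH => ?_⟩
  · rw [← le_bot_iff, ← e.symm.toMonoidHom.ker_eq_bot_iff.2 e.symm.injective]
    exact frattini_le_ker_of_surjective e.symm.surjective hG
  · rw [← le_bot_iff, ← e.toMonoidHom.ker_eq_bot_iff.2 e.injective]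
    exact frattini_le_ker_of_surjective e.surjective hH

lemma frattini_quotient_le_map_of_le {N M : Subgroup G} [N.Normal] [M.Normal] (hNM : N ≤ M)
    (hM : frattini (G ⧸ M) = ⊥) : frattini (G ⧸ N) ≤ M.map (mk' N) := by
  have hK : frattini ((G ⧸ N) ⧸ M.map (mk' N)) = ⊥ :=
    (quotientQuotientEquivQuotient N M hNM).frattini_eq_bot_iff.2 hM
  simpa only [ker_mk'] using frattini_le_ker_of_surjective (mk'_surjective _) hK

lemma classB_quotient_iff {N : Subgroup G} [N.Normal] :
    classB (G ⧸ N) ↔ ∀ (M : Subgroup G) [M.Normal], N ≤ M → frattini (G ⧸ M) = ⊥ := by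
  refine ⟨fun hB M _ hNM => ?_, fun hB K _ => ?_⟩
  · exact (quotientQuotientEquivQuotient N M hNM).frattini_eq_bot_iff.1 (hB _)
  · have hK : (K.comap (mk' N)).map (mk' N) = K :=
      map_comap_eq_self_of_surjective (mk'_surjective N) K
    have hNK : N ≤ K.comap (mk' N) := by
      simpa only [ker_mk'] using (mk' N).ker_le_comap K
    rw [← (quotientMulEquivOfEq hK).frattini_eq_bot_iff,
      (quotientQuotientEquivQuotient N _ hNK).frattini_eq_bot_iff]
    exact hB _ hNK

end

theorem stmt_17_general (G : Type*) [Group G] :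
    (∀ (N : Subgroup G) [N.Normal],
        frattini (G ⧸ N) = (frattini G).map (QuotientGroup.mk' N)) ↔
      classB (G ⧸ frattini G) := by
  rw [classB_quotient_iff]
  refine ⟨fun h M _ hM => ?_, fun hB N _ => ?_⟩
  · rwa [h M, Subgroup.map_eq_bot_iff, ker_mk']
  · refine le_antisymm ?_ (map_frattini_le_of_surjective (mk'_surjective N))
    have := frattini_quotient_le_map_of_le le_sup_right (hB (frattini G ⊔ N) le_sup_left)
    rwa [Subgroup.map_sup, map_mk'_self, sup_bot_eq] at this

/-- `Φ(G/N) = Φ(G)N/N` for all `N ⊴ G` iff `G/Φ(G)` has no Frattini chief factors. -/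
theorem stmt_17 (G : Type*) [Group G] [Finite G] :
    (∀ (N : Subgroup G) [N.Normal],
        frattini (G ⧸ N) = (frattini G).map (QuotientGroup.mk' N)) ↔
      classB (G ⧸ frattini G) :=
  stmt_17_general G
end
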